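/- arXiv:math/0601706 — 4 statements merged into one kernel-verified Lean document; each statement's English description precedes it below -/
import Mathlib

section
/- For every nonzero integer j and every integer k with 2k ≥ j + 2, the element (u·w)^{2k−j−1} · v · w · v · (w·u)^j commutes with x. -/
/-!
Put `y = w x w`. Conjugation by `u` and `v` fixes both `x` and `y`, while conjugation by `w`
interchanges them, so conjugation by a word in `u`, `v`, `w` fixes `x` as soon as `w` occurs an
even number of times, counted with sign. Here that count is `(2k - j - 1) + 1 + j = 2k`.
-/

namespace Units

variable {M G : Type*} [Monoid M] [AddCommGroup G] {p : G → M}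

def ShiftsBy (p : G → M) (a : Mˣ) (g : G) : Prop :=
  ∀ i, SemiconjBy (a : M) (p i) (p (i + g))

namespace ShiftsBy

theorem one : ShiftsBy p 1 0 := fun i => by
  rw [add_zero, val_one]
  exact SemiconjBy.one_left _

theorem mul {a b : Mˣ} {g h : G} (ha : ShiftsBy p a g) (hb : ShiftsBy p b h) :
    ShiftsBy p (a * b) (g + h) := fun i => by
  rw [val_mul, add_comm g, ← add_assoc]
  exact (ha (i + h)).mul_left (hb i)

theorem inv {a : Mˣ} {g : G} (ha : ShiftsBy p a g) : ShiftsBy p a⁻¹ (-g) := fun i => by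
  simpa only [neg_add_cancel_right] using (ha (i + -g)).units_inv_symm_left

theorem zpow {a : Mˣ} {g : G} (ha : ShiftsBy p a g) (n : ℤ) : ShiftsBy p (a ^ n) (n • g) := by
  induction n with
  | zero => simpa using one
  | succ n ih =>
    rw [zpow_add_one, add_zsmul, one_zsmul]
    exact ih.mul ha
  | pred n ih =>
    rw [zpow_sub_one, sub_zsmul, one_zsmul]
    exact ih.mul ha.inv

theorem commute {a : Mˣ} (ha : ShiftsBy p a 0) (i : G) : Commute (a : M) (p i) := by
  have hi := ha i
  rwa [add_zero] at hi

end ShiftsBy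

theorem shiftsBy_zero_of_commute {x y : M} {a : Mˣ} (hx : Commute (a : M) x)
    (hy : Commute (a : M) y) : ShiftsBy (G := ZMod 2) ![x, y] a 0 := by
  intro i
  fin_cases i <;> simpa

theorem shiftsBy_one_of_semiconjBy {x y : M} {a : Mˣ} (hx : SemiconjBy (a : M) x y)
    (hy : SemiconjBy (a : M) y x) : ShiftsBy (G := ZMod 2) ![x, y] a 1 := by
  intro i
  fin_cases i
  exacts [hx, hy]

end Units

open Units

theorem commutes_with_word_general {A : Type*} [Ring A] (u v w : Aˣ) (x : A)
    (hw : w * w = 1)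
    (hux : (u : A) * x = x * u) (hvx : (v : A) * x = x * v)
    (huwxw : (u : A) * ((w : A) * x * w) = ((w : A) * x * w) * u)
    (hvwxw : (v : A) * ((w : A) * x * w) = ((w : A) * x * w) * v)
    (j k : ℤ) :
    (((u * w) ^ (2 * k - j - 1) * v * w * v * (w * u) ^ j : Aˣ) : A) * x
      = x * (((u * w) ^ (2 * k - j - 1) * v * w * v * (w * u) ^ j : Aˣ) : A) := by
  have hwA : (w : A) * w = 1 := by rw [← val_mul, hw, val_one]
  have hu := shiftsBy_zero_of_commute hux huwxw
  have hv := shiftsBy_zero_of_commute hvx hvwxw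
  have hw' : ShiftsBy (G := ZMod 2) ![x, (w : A) * x * w] w 1 :=
    shiftsBy_one_of_semiconjBy (by simp [SemiconjBy, mul_assoc, hwA])
      (by simp [SemiconjBy, ← mul_assoc, hwA])
  have hword := (((((hu.mul hw').zpow (2 * k - j - 1)).mul hv).mul hw').mul hv).mul
    ((hw'.mul hu).zpow j)
  have hparity : (2 * k - j - 1) • ((0 : ZMod 2) + 1) + 0 + 1 + 0 + j • (1 + 0) = 0 := by
    simp only [zsmul_eq_mul, zero_add, add_zero, mul_one]
    push_cast
    ring_nf
    reduce_mod_char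
  rw [hparity] at hword
  exact hword.commute 0

/-- In a unital ring `A` with invertible elements `u, v, w` such that
`w * w = 1` and such that `u` and `v` each commute with both `x` and `w * x * w`, for
every nonzero integer `j` and every integer `k` with `2 * k ≥ j + 2`, the element
`(u * w) ^ (2 * k - j - 1) * v * w * v * (w * u) ^ j` commutes with `x`. -/
theorem commutes_with_word {A : Type*} [Ring A] (u v w : Aˣ) (x : A)
    (hw : w * w = 1)
    (hux : (u : A) * x = x * u) (hvx : (v : A) * x = x * v)
    (huwxw : (u : A) * ((w : A) * x * w) = ((w : A) * x * w) * u)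
    (hvwxw : (v : A) * ((w : A) * x * w) = ((w : A) * x * w) * v)
    (j k : ℤ) (hj : j ≠ 0) (hk : 2 * k ≥ j + 2) :
    (((u * w) ^ (2 * k - j - 1) * v * w * v * (w * u) ^ j : Aˣ) : A) * x
      = x * (((u * w) ^ (2 * k - j - 1) * v * w * v * (w * u) ^ j : Aˣ) : A) :=
  commutes_with_word_general u v w x hw hux hvx huwxw hvwxw j k
end

section
/- With u := j₁(E₁₂)·j_θ(E₂₁), for every c ∈ C one has u · j_θ(θ(c)·E₁₁) · u* = j_θ(c·E₁₁), where θ(c)·E₁₁ and c·E₁₁ denote the 2×2 matrices with θ(c) (respectively c) in the (1,1) entry and 0 elsewhere. Moreover u · j_θ(E₁₂) = j₁(E₁₂). -/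
open Matrix

theorem Matrix.star_single {n α : Type*} [DecidableEq n] [AddMonoid α] [StarAddMonoid α]
    (i j : n) (a : α) : star (single i j a) = single j i (star a) := by
  rw [star_eq_conjTranspose, conjTranspose_single]

theorem Matrix.single_mul_single_mul_single {n α : Type*} [DecidableEq n] [Fintype n]
    [NonUnitalSemiring α] (i j k l : n) (a b c : α) :
    single i j a * single j k b * single k l c = single i l (a * b * c) := by
  rw [single_mul_single_same, single_mul_single_same]

theorem Matrix.single_zero_zero_eq_diagonal_fin_two {α : Type*} [Zero α] (a : α) :
    single (0 : Fin 2) 0 a = diagonal ![a, 0] := by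
  rw [← diagonal_single]; congr 1; ext i; fin_cases i <;> rfl

theorem Matrix.single_one_one_eq_diagonal_fin_two {α : Type*} [Zero α] (a : α) :
    single (1 : Fin 2) 1 a = diagonal ![0, a] := by
  rw [← diagonal_single]; congr 1; ext i; fin_cases i <;> rfl

section DiagonalCompatible

variable {B C 𝒜 : Type*} [Ring B] [Ring C] [Ring 𝒜] {incl θ : C →+* B}
  {jθ : Matrix (Fin 2) (Fin 2) B →+* 𝒜} {j₁ : Matrix (Fin 2) (Fin 2) C →+* 𝒜}

theorem map_single_zero_zero_of_diagonal_compat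
    (hcompat : ∀ c₁ c₂ : C, jθ (diagonal ![incl c₁, θ c₂]) = j₁ (diagonal ![c₁, c₂]))
    (c : C) : jθ (single 0 0 (incl c)) = j₁ (single 0 0 c) := by
  simpa only [map_zero, ← single_zero_zero_eq_diagonal_fin_two] using hcompat c 0

theorem map_single_one_one_of_diagonal_compat
    (hcompat : ∀ c₁ c₂ : C, jθ (diagonal ![incl c₁, θ c₂]) = j₁ (diagonal ![c₁, c₂]))
    (c : C) : jθ (single 1 1 (θ c)) = j₁ (single 1 1 c) := by
  simpa only [map_zero, ← single_one_one_eq_diagonal_fin_two] using hcompat 0 c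

end DiagonalCompatible

theorem hnn_stable_unitary_relation_general {B C 𝒜 : Type*} [Ring B] [StarRing B] [Ring C]
    [StarRing C] [Ring 𝒜] [StarRing 𝒜]
    (incl : C →+* B)
    (θ : C →+* B)
    (jθ : Matrix (Fin 2) (Fin 2) B →+* 𝒜)
    (hjθ_star : ∀ m : Matrix (Fin 2) (Fin 2) B, jθ (star m) = star (jθ m))
    (j₁ : Matrix (Fin 2) (Fin 2) C →+* 𝒜)
    (hj₁_star : ∀ m : Matrix (Fin 2) (Fin 2) C, j₁ (star m) = star (j₁ m))
    (hcompat : ∀ c₁ c₂ : C,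
      jθ (Matrix.diagonal ![incl c₁, θ c₂]) = j₁ (Matrix.diagonal ![c₁, c₂])) :
    (∀ c : C,
      (j₁ (Matrix.single 0 1 1) * jθ (Matrix.single 1 0 1)) *
          jθ (Matrix.single 0 0 (θ c)) *
          star (j₁ (Matrix.single 0 1 1) * jθ (Matrix.single 1 0 1))
        = jθ (Matrix.single 0 0 (incl c)))
    ∧ (j₁ (Matrix.single 0 1 1) * jθ (Matrix.single 1 0 1)) *
        jθ (Matrix.single 0 1 1)
      = j₁ (Matrix.single 0 1 1) := by
  have hstar : star (j₁ (single 0 1 1) * jθ (single 1 0 1)) =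
      jθ (single 0 1 1) * j₁ (single 1 0 1) := by
    rw [star_mul, ← hjθ_star, ← hj₁_star, star_single, star_single, star_one, star_one]
  refine ⟨fun c => ?_, ?_⟩
  -- Conjugating by `single 1 0 1` moves `θ c` to the lower corner, where `hcompat` trades `jθ` for `j₁`.
  · calc _ = j₁ (single 0 1 1) * jθ (single 1 0 1 * single 0 0 (θ c) * single 0 1 1) *
            j₁ (single 1 0 1) := by
          simp only [hstar, map_mul, mul_assoc]
      _ = j₁ (single 0 1 1 * single 1 1 c * single 1 0 1) := by
          rw [single_mul_single_mul_single, one_mul, mul_one,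
            map_single_one_one_of_diagonal_compat hcompat, map_mul, map_mul]
      _ = jθ (single 0 0 (incl c)) := by
          rw [single_mul_single_mul_single, one_mul, mul_one,
            map_single_zero_zero_of_diagonal_compat hcompat]
  · calc _ = j₁ (single 0 1 1) * jθ (single 1 1 (θ 1)) := by
          rw [mul_assoc, ← map_mul, single_mul_single_same, one_mul, map_one]
      _ = j₁ (single 0 1 1) := by
          rw [map_single_one_one_of_diagonal_compat hcompat, ← map_mul,
            single_mul_single_same, mul_one]

/-- In the setting of star rings `B ⊇ C` (the subring modelled by an
injective unital star-ring embedding `incl : C →+* B`), `θ : C →+* B` a unital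
star-ring homomorphism, and unital star-ring homomorphisms `jθ : M₂(B) →+* 𝒜`,
`j₁ : M₂(C) →+* 𝒜` with `jθ (diag (c₁, θ c₂)) = j₁ (diag (c₁, c₂))`, the element
`u := j₁ E₁₂ * jθ E₂₁` satisfies `u * jθ (θ(c)·E₁₁) * u* = jθ (c·E₁₁)` for every
`c ∈ C`, and moreover `u * jθ E₁₂ = j₁ E₁₂`. -/
theorem hnn_stable_unitary_relation {B C 𝒜 : Type*} [Ring B] [StarRing B] [Ring C]
    [StarRing C] [Ring 𝒜] [StarRing 𝒜]
    (incl : C →+* B) (hincl_star : ∀ c : C, incl (star c) = star (incl c))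
    (hincl_inj : Function.Injective incl)
    (θ : C →+* B) (hθ_star : ∀ c : C, θ (star c) = star (θ c))
    (jθ : Matrix (Fin 2) (Fin 2) B →+* 𝒜)
    (hjθ_star : ∀ m : Matrix (Fin 2) (Fin 2) B, jθ (star m) = star (jθ m))
    (j₁ : Matrix (Fin 2) (Fin 2) C →+* 𝒜)
    (hj₁_star : ∀ m : Matrix (Fin 2) (Fin 2) C, j₁ (star m) = star (j₁ m))
    (hcompat : ∀ c₁ c₂ : C,
      jθ (Matrix.diagonal ![incl c₁, θ c₂]) = j₁ (Matrix.diagonal ![c₁, c₂])) :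
    (∀ c : C,
      (j₁ (Matrix.single 0 1 1) * jθ (Matrix.single 1 0 1)) *
          jθ (Matrix.single 0 0 (θ c)) *
          star (j₁ (Matrix.single 0 1 1) * jθ (Matrix.single 1 0 1))
        = jθ (Matrix.single 0 0 (incl c)))
    ∧ (j₁ (Matrix.single 0 1 1) * jθ (Matrix.single 1 0 1)) *
        jθ (Matrix.single 0 1 1)
      = j₁ (Matrix.single 0 1 1) :=
  hnn_stable_unitary_relation_general incl θ jθ hjθ_star j₁ hj₁_star hcompat
end

section
/- Let θ, ι : C → B, κ : B → A, δ : A → C′ × C′ and θ′, ι′ : C′ → B′ be homomorphisms of abelian groups. If ker δ = range ψ_{κ,ι} and range δ ⊆ ker φ_{θ′,ι′}, then ker(π₂ ∘ δ) = range κ. -/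
namespace AddMonoidHom

theorem range_eq_range_of_apply_eq_sub {A B C : Type*} [AddGroup A] [AddGroup B] [AddGroup C]
    {κ : B →+ A} {ι : C →+ B} {ψ : B × C →+ A} (hψ : ∀ x y, ψ (x, y) = κ x - κ (ι y)) :
    range ψ = range κ := by
  ext a
  constructor
  · rintro ⟨⟨x, y⟩, rfl⟩
    exact ⟨x - ι y, by rw [map_sub, hψ]⟩
  · rintro ⟨x, rfl⟩
    exact ⟨(x, 0), by rw [hψ, map_zero, map_zero, sub_zero]⟩

theorem ker_snd_comp_eq_ker_of_range_le {A C M : Type*} [AddGroup A] [AddGroup C]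
    [AddGroup M] {δ : A →+ C × C} {φ : C × C →+ M × C}
    (hφ : ∀ x y, (φ (x, y)).2 = x + y) (h : range δ ≤ ker φ) :
    ker ((snd C C).comp δ) = ker δ := by
  refine le_antisymm (fun a ha => ?_) (fun a ha => by simp_all)
  have hsnd : (δ a).2 = 0 := ha
  have hsum : (δ a).1 + (δ a).2 = 0 := by
    rw [← hφ, Prod.mk.eta, (h ⟨a, rfl⟩ : φ (δ a) = 0), Prod.snd_zero]
  rw [hsnd, add_zero] at hsum
  exact Prod.ext hsum hsnd

end AddMonoidHom

theorem ker_pi2_delta_eq_range_kappa_general {A B C C' B' : Type*} [AddCommGroup A]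
    [AddCommGroup B] [AddCommGroup C] [AddCommGroup C'] [AddCommGroup B']
    (ι : C →+ B) (κ : B →+ A) (δ : A →+ C' × C') (θ' ι' : C' →+ B')
    (ψ : B × C →+ A) (hψ : ∀ (x : B) (y : C), ψ (x, y) = κ x - κ (ι y))
    (φ' : C' × C' →+ B' × C') (hφ' : ∀ x y : C', φ' (x, y) = (ι' x + θ' y, x + y))
    (h₁ : AddMonoidHom.ker δ = AddMonoidHom.range ψ)
    (h₂ : AddMonoidHom.range δ ≤ AddMonoidHom.ker φ') :
    AddMonoidHom.ker ((AddMonoidHom.snd C' C').comp δ) = AddMonoidHom.range κ := by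
  rw [AddMonoidHom.ker_snd_comp_eq_ker_of_range_le (fun x y => by rw [hφ']) h₂, h₁,
    AddMonoidHom.range_eq_range_of_apply_eq_sub hψ]

/-- If `ker δ = range ψ_{κ,ι}` and `range δ ⊆ ker φ_{θ',ι'}`, then
`ker (π₂ ∘ δ) = range κ`. -/
theorem ker_pi2_delta_eq_range_kappa {A B C C' B' : Type*} [AddCommGroup A]
    [AddCommGroup B] [AddCommGroup C] [AddCommGroup C'] [AddCommGroup B']
    (θ ι : C →+ B) (κ : B →+ A) (δ : A →+ C' × C') (θ' ι' : C' →+ B')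
    (ψ : B × C →+ A) (hψ : ∀ (x : B) (y : C), ψ (x, y) = κ x - κ (ι y))
    (φ' : C' × C' →+ B' × C') (hφ' : ∀ x y : C', φ' (x, y) = (ι' x + θ' y, x + y))
    (h₁ : AddMonoidHom.ker δ = AddMonoidHom.range ψ)
    (h₂ : AddMonoidHom.range δ ≤ AddMonoidHom.ker φ') :
    AddMonoidHom.ker ((AddMonoidHom.snd C' C').comp δ) = AddMonoidHom.range κ :=
  ker_pi2_delta_eq_range_kappa_general ι κ δ θ' ι' ψ hψ φ' hφ' h₁ h₂
end

section
/- Let C₀, B₀, A₀, C₁, B₁, A₁ be abelian groups with homomorphisms θᵢ, ιᵢ : Cᵢ → Bᵢ and κᵢ : Bᵢ → Aᵢ (i = 0, 1), δ₀ : A₀ → C₁ × C₁ and δ₁ : A₁ → C₀ × C₀. Assume the cyclic six-term sequence C₀ × C₀ → B₀ × C₀ → A₀ → C₁ × C₁ → B₁ × C₁ → A₁ → C₀ × C₀ with maps φ_{θ₀,ι₀}, ψ_{κ₀,ι₀}, δ₀, φ_{θ₁,ι₁}, ψ_{κ₁,ι₁}, δ₁ is exact at every one of the six spots (in particular ker φ_{θ₀,ι₀}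 = range δ₁ and ker φ_{θ₁,ι₁} = range δ₀). Then the cyclic six-term sequence C₀ → B₀ → A₀ → C₁ → B₁ → A₁ → C₀ with maps θ₀ − ι₀, κ₀, π₂ ∘ δ₀, θ₁ − ι₁, κ₁, π₂ ∘ δ₁ is exact at every one of the six spots. -/
/-!
Write `φ = φ_{θ,ι}` and `ψ = ψ_{κ,ι}`. A pair `(x, y)` lies in `ker φ` exactly when `x = -y` and
`y ∈ ker (θ - ι)`, so `π₂` maps `ker φ` isomorphically onto `ker (θ - ι)`; and `ψ (x, y) = κ (x - ι y)`,
so `range ψ = range κ`. Exactness of the doubled sequence then transfers spot by spot: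
at `B` because `ker ψ = range φ`, at `A` because `range δ ⊆ ker φ` makes `π₂` injective on `range δ`,
and at `C` because `range (π₂ ∘ δ) = π₂ (ker φ) = ker (θ - ι)`.
-/

namespace SixTerm

variable {A B C : Type*} [AddCommGroup A] [AddCommGroup B] [AddCommGroup C]
  {θ ι : C →+ B} {κ : B →+ A} {φ : C × C →+ B × C} {ψ : B × C →+ A}

theorem phi_eq_zero_iff (hφ : ∀ x y : C, φ (x, y) = (ι x + θ y, x + y)) (p : C × C) :
    φ p = 0 ↔ p.1 = -p.2 ∧ (θ - ι) p.2 = 0 := by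
  obtain ⟨x, y⟩ := p
  rw [hφ, Prod.mk_eq_zero, AddMonoidHom.sub_apply, sub_eq_zero]
  dsimp only
  constructor
  · rintro ⟨h, hxy⟩
    obtain rfl := eq_neg_of_add_eq_zero_left hxy
    rw [map_neg, neg_add_eq_zero] at h
    exact ⟨rfl, h.symm⟩
  · rintro ⟨rfl, h⟩
    rw [map_neg, h, neg_add_cancel, neg_add_cancel]
    exact ⟨rfl, rfl⟩

theorem map_snd_ker_phi (hφ : ∀ x y : C, φ (x, y) = (ι x + θ y, x + y)) :
    (AddMonoidHom.ker φ).map (AddMonoidHom.snd C C) = AddMonoidHom.ker (θ - ι) := by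
  ext c
  constructor
  · rintro ⟨p, hp, rfl⟩
    exact ((phi_eq_zero_iff hφ p).mp hp).2
  · intro hc
    exact ⟨(-c, c), (phi_eq_zero_iff hφ _).mpr ⟨rfl, hc⟩, rfl⟩

theorem ker_snd_comp_eq_ker (hφ : ∀ x y : C, φ (x, y) = (ι x + θ y, x + y))
    {δ : A →+ C × C} (hδ : AddMonoidHom.range δ ≤ AddMonoidHom.ker φ) :
    AddMonoidHom.ker ((AddMonoidHom.snd C C).comp δ) = AddMonoidHom.ker δ := by
  ext a
  have hfst := ((phi_eq_zero_iff hφ (δ a)).mp (hδ ⟨a, rfl⟩)).1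
  simp only [AddMonoidHom.mem_ker, AddMonoidHom.coe_comp, Function.comp_apply,
    AddMonoidHom.coe_snd]
  constructor
  · intro h
    exact Prod.ext (by rw [hfst, h, neg_zero]; rfl) h
  · intro h
    rw [h]
    rfl

theorem range_psi (hψ : ∀ (x : B) (y : C), ψ (x, y) = κ x - κ (ι y)) :
    AddMonoidHom.range ψ = AddMonoidHom.range κ := by
  ext a
  constructor
  · rintro ⟨⟨x, y⟩, rfl⟩
    exact ⟨x - ι y, by rw [map_sub, hψ]⟩
  · rintro ⟨b, rfl⟩
    exact ⟨(b, 0), by rw [hψ, map_zero, map_zero, sub_zero]⟩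

theorem ker_eq_range_sub (hφ : ∀ x y : C, φ (x, y) = (ι x + θ y, x + y))
    (hψ : ∀ (x : B) (y : C), ψ (x, y) = κ x - κ (ι y))
    (hexact : AddMonoidHom.ker ψ = AddMonoidHom.range φ) :
    AddMonoidHom.ker κ = AddMonoidHom.range (θ - ι) := by
  ext b
  rw [AddMonoidHom.mem_ker]
  constructor
  · intro hb
    have hmem : (b, (0 : C)) ∈ AddMonoidHom.range φ := by
      rw [← hexact, AddMonoidHom.mem_ker, hψ, hb, map_zero, map_zero, sub_zero]
    obtain ⟨⟨x, y⟩, hxy⟩ := hmem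
    rw [hφ, Prod.mk.injEq, ← eq_neg_iff_add_eq_zero] at hxy
    obtain ⟨rfl, rfl⟩ := hxy
    refine ⟨y, ?_⟩
    rw [AddMonoidHom.sub_apply, map_neg, neg_add_eq_sub]
  · rintro ⟨c, rfl⟩
    have hzero : φ (0, c) ∈ AddMonoidHom.ker ψ := hexact ▸ ⟨(0, c), rfl⟩
    rwa [AddMonoidHom.mem_ker, hφ, map_zero, zero_add, zero_add, hψ, ← map_sub] at hzero

end SixTerm

open SixTerm in
/-- If the cyclic six-term sequence
`C₀ × C₀ → B₀ × C₀ → A₀ → C₁ × C₁ → B₁ × C₁ → A₁ → C₀ × C₀` with maps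
`φ_{θ₀,ι₀}, ψ_{κ₀,ι₀}, δ₀, φ_{θ₁,ι₁}, ψ_{κ₁,ι₁}, δ₁` is exact at every spot, then the
cyclic six-term sequence `C₀ → B₀ → A₀ → C₁ → B₁ → A₁ → C₀` with maps
`θ₀ - ι₀, κ₀, π₂ ∘ δ₀, θ₁ - ι₁, κ₁, π₂ ∘ δ₁` is exact at every spot. -/
theorem sixTerm_exact {C₀ B₀ A₀ C₁ B₁ A₁ : Type*}
    [AddCommGroup C₀] [AddCommGroup B₀] [AddCommGroup A₀]
    [AddCommGroup C₁] [AddCommGroup B₁] [AddCommGroup A₁]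
    (θ₀ ι₀ : C₀ →+ B₀) (κ₀ : B₀ →+ A₀) (θ₁ ι₁ : C₁ →+ B₁) (κ₁ : B₁ →+ A₁)
    (δ₀ : A₀ →+ C₁ × C₁) (δ₁ : A₁ →+ C₀ × C₀)
    (φ₀ : C₀ × C₀ →+ B₀ × C₀) (hφ₀ : ∀ x y : C₀, φ₀ (x, y) = (ι₀ x + θ₀ y, x + y))
    (ψ₀ : B₀ × C₀ →+ A₀) (hψ₀ : ∀ (x : B₀) (y : C₀), ψ₀ (x, y) = κ₀ x - κ₀ (ι₀ y))
    (φ₁ : C₁ × C₁ →+ B₁ × C₁) (hφ₁ : ∀ x y : C₁, φ₁ (x, y) = (ι₁ x + θ₁ y, x + y))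
    (ψ₁ : B₁ × C₁ →+ A₁) (hψ₁ : ∀ (x : B₁) (y : C₁), ψ₁ (x, y) = κ₁ x - κ₁ (ι₁ y))
    (e₁ : AddMonoidHom.ker ψ₀ = AddMonoidHom.range φ₀)
    (e₂ : AddMonoidHom.ker δ₀ = AddMonoidHom.range ψ₀)
    (e₃ : AddMonoidHom.ker φ₁ = AddMonoidHom.range δ₀)
    (e₄ : AddMonoidHom.ker ψ₁ = AddMonoidHom.range φ₁)
    (e₅ : AddMonoidHom.ker δ₁ = AddMonoidHom.range ψ₁)
    (e₆ : AddMonoidHom.ker φ₀ = AddMonoidHom.range δ₁) :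
    AddMonoidHom.ker κ₀ = AddMonoidHom.range (θ₀ - ι₀)
    ∧ AddMonoidHom.ker ((AddMonoidHom.snd C₁ C₁).comp δ₀) = AddMonoidHom.range κ₀
    ∧ AddMonoidHom.ker (θ₁ - ι₁)
        = AddMonoidHom.range ((AddMonoidHom.snd C₁ C₁).comp δ₀)
    ∧ AddMonoidHom.ker κ₁ = AddMonoidHom.range (θ₁ - ι₁)
    ∧ AddMonoidHom.ker ((AddMonoidHom.snd C₀ C₀).comp δ₁) = AddMonoidHom.range κ₁
    ∧ AddMonoidHom.ker (θ₀ - ι₀)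
        = AddMonoidHom.range ((AddMonoidHom.snd C₀ C₀).comp δ₁) := by
  refine ⟨ker_eq_range_sub hφ₀ hψ₀ e₁, ?_, ?_, ker_eq_range_sub hφ₁ hψ₁ e₄, ?_, ?_⟩
  · rw [ker_snd_comp_eq_ker hφ₁ e₃.ge, e₂, range_psi hψ₀]
  · rw [AddMonoidHom.range_comp, ← e₃, map_snd_ker_phi hφ₁]
  · rw [ker_snd_comp_eq_ker hφ₀ e₆.ge, e₅, range_psi hψ₁]
  · rw [AddMonoidHom.range_comp, ← e₆, map_snd_ker_phi hφ₀]
end
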